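/- arXiv:1907.05378 — 4 statements merged into one kernel-verified Lean document; each statement's English description precedes it below -/
import Mathlib

section
/- Let F : 2^[n] → ℝ be a submodular function with F(∅) = 0, let f be its Lovász extension, and let g(x) be the Lovász subgradient at x ∈ [0,1]^n. Then for all y ∈ [0,1]^n, ⟨g(x), x - y⟩ ≥ f(x) - f(y), i.e., g(x) is a subgradient of f at x. -/
/-!
Pairing `g = g(x)` with any vector reproduces the Lovász extension along `P`, so `⟨g, x⟩ = f(x)`
and it remains to show `⟨g, y⟩ ≤ f(y)`. Submodularity puts `g` in the submodular polyhedron,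
`g(S) ≤ F(S)`: each increment of `F` along the chain `P[k]` is dominated by the increment along
`S ∩ P[k]`. Then `D_k = F(Q[k]) - g(Q[k])` is nonnegative with `D_0 = 0`, and
`f(y) - ⟨g, y⟩ = ∑_k (D_{k+1} - D_k) y_{Q_k}` is nonnegative by Abel summation, since `y_{Q_k}`
decreases to `y_{Q_n} := 0`.
-/

open Finset

/-- A set function on subsets of `Fin n` is submodular (diminishing returns). -/
def Submodular {n : ℕ} (F : Finset (Fin n) → ℝ) : Prop :=
  ∀ ⦃A B : Finset (Fin n)⦄, A ⊆ B → ∀ i ∉ B,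
    F (insert i A) - F A ≥ F (insert i B) - F B

/-- `P` is the permutation consistent with `x`: coordinates in nonincreasing order,
ties broken by increasing index. -/
def Consistent {n : ℕ} (x : Fin n → ℝ) (P : Equiv.Perm (Fin n)) : Prop :=
  ∀ i j : Fin n, i ≤ j → x (P i) ≥ x (P j) ∧ (x (P i) = x (P j) → P i ≤ P j)

/-- `P[k] = {P_1, …, P_k}` (0-indexed: the images of positions `< k`). -/
def prefixSet {n : ℕ} (P : Equiv.Perm (Fin n)) (k : ℕ) : Finset (Fin n) :=
  (Finset.univ.filter (fun i : Fin n => (i : ℕ) < k)).image P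

/-- The Lovász extension of `F` at `x`, expressed via the permutation `P` consistent
with `x`. -/
def lovaszExt {n : ℕ} (F : Finset (Fin n) → ℝ) (P : Equiv.Perm (Fin n))
    (x : Fin n → ℝ) : ℝ :=
  ∑ i : Fin n, (F (prefixSet P ((i : ℕ) + 1)) - F (prefixSet P (i : ℕ))) * x (P i)

/-- The Lovász subgradient at `x`: `g(x)_{P_i} = F(P[i]) - F(P[i-1])`. -/
def lovaszGrad {n : ℕ} (F : Finset (Fin n) → ℝ) (P : Equiv.Perm (Fin n)) :
    Fin n → ℝ :=
  fun j => F (prefixSet P ((P.symm j : ℕ) + 1)) - F (prefixSet P ((P.symm j : ℕ)))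

lemma sum_range_sub_mul_ge {R : Type*} [CommRing R] [PartialOrder R] [IsOrderedRing R]
    {D t : ℕ → R} (hD0 : D 0 = 0) (hD : ∀ k, 0 ≤ D k) (ht : ∀ k, t (k + 1) ≤ t k)
    (m : ℕ) :
    D m * t m ≤ ∑ k ∈ range m, (D (k + 1) - D k) * t k := by
  induction m with
  | zero => simp [hD0]
  | succ m ih =>
    rw [sum_range_succ]
    calc D (m + 1) * t (m + 1) ≤ D (m + 1) * t m := mul_le_mul_of_nonneg_left (ht m) (hD _)
      _ = D m * t m + (D (m + 1) - D m) * t m := by ring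
      _ ≤ _ := by gcongr

section prefixSet

variable {n : ℕ} (P : Equiv.Perm (Fin n))

lemma mem_prefixSet {k : ℕ} {j : Fin n} : j ∈ prefixSet P k ↔ (P.symm j : ℕ) < k := by
  simp only [prefixSet, mem_image, mem_filter, mem_univ, true_and]
  exact ⟨by rintro ⟨i, hi, rfl⟩; simpa using hi, fun h => ⟨P.symm j, h, by simp⟩⟩

@[simp]
lemma prefixSet_zero : prefixSet P 0 = ∅ := by
  ext j; simp [mem_prefixSet]

@[simp]
lemma prefixSet_self : prefixSet P n = univ := by
  ext j; simp [mem_prefixSet, (P.symm j).isLt]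

lemma apply_notMem_prefixSet (k : Fin n) : P k ∉ prefixSet P k := by
  simp [mem_prefixSet]

lemma prefixSet_succ (k : Fin n) : prefixSet P (k + 1) = insert (P k) (prefixSet P k) := by
  ext j
  rw [mem_insert, mem_prefixSet, mem_prefixSet, Nat.lt_succ_iff_lt_or_eq, ← Equiv.symm_apply_eq,
    Fin.ext_iff]
  tauto

lemma sum_sub_prefixSet {M : Type*} [AddCommGroup M] (G : Finset (Fin n) → M) :
    ∑ k : Fin n, (G (prefixSet P (k + 1)) - G (prefixSet P k)) = G univ - G ∅ := by
  rw [Fin.sum_univ_eq_sum_range (fun k => G (prefixSet P (k + 1)) - G (prefixSet P k)),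
    sum_range_sub (fun k => G (prefixSet P k)), prefixSet_self, prefixSet_zero]

end prefixSet

section lovasz

variable {n : ℕ} (F : Finset (Fin n) → ℝ)

lemma lovaszGrad_apply_perm (P : Equiv.Perm (Fin n)) (k : Fin n) :
    lovaszGrad F P (P k) = F (prefixSet P (k + 1)) - F (prefixSet P k) := by
  simp [lovaszGrad]

lemma lovaszExt_eq_sum_lovaszGrad_mul (P : Equiv.Perm (Fin n)) (x : Fin n → ℝ) :
    lovaszExt F P x = ∑ i, lovaszGrad F P i * x i := by
  rw [← Equiv.sum_comp P]
  simp [lovaszExt, lovaszGrad_apply_perm]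

lemma sum_lovaszGrad_le (hsub : Submodular F) (h0 : F ∅ = 0) (P : Equiv.Perm (Fin n))
    (S : Finset (Fin n)) : ∑ j ∈ S, lovaszGrad F P j ≤ F S := by
  have hterm : ∀ k : Fin n, (if P k ∈ S then lovaszGrad F P (P k) else 0)
      ≤ F (S ∩ prefixSet P (k + 1)) - F (S ∩ prefixSet P k) := by
    intro k
    rw [prefixSet_succ]
    split_ifs with hk
    · rw [inter_insert_of_mem hk, lovaszGrad_apply_perm, prefixSet_succ]
      exact hsub inter_subset_right _ (apply_notMem_prefixSet P k)
    · rw [inter_insert_of_notMem hk, sub_self]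
  calc ∑ j ∈ S, lovaszGrad F P j
      = ∑ k : Fin n, if P k ∈ S then lovaszGrad F P (P k) else 0 := by
        rw [← sum_filter]
        exact (sum_equiv P (by simp) (by simp)).symm
    _ ≤ ∑ k : Fin n, (F (S ∩ prefixSet P (k + 1)) - F (S ∩ prefixSet P k)) :=
        sum_le_sum fun k _ => hterm k
    _ = F S := by
        rw [sum_sub_prefixSet P (fun T => F (S ∩ T))]
        simp [h0]

lemma Consistent.antitone {x : Fin n → ℝ} {P : Equiv.Perm (Fin n)} (hP : Consistent x P) :
    Antitone (x ∘ P) :=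
  fun _ _ hij => (hP _ _ hij).1

lemma sum_mul_le_lovaszExt (h0 : F ∅ = 0) (w : Fin n → ℝ) (hw : ∀ S, ∑ j ∈ S, w j ≤ F S)
    (y : Fin n → ℝ) (hy : ∀ i, 0 ≤ y i) (Q : Equiv.Perm (Fin n)) (hQ : Consistent y Q) :
    ∑ i, w i * y i ≤ lovaszExt F Q y := by
  set D : ℕ → ℝ := fun k => F (prefixSet Q k) - ∑ j ∈ prefixSet Q k, w j
  set t : ℕ → ℝ := fun k => if h : k < n then y (Q ⟨k, h⟩) else 0
  have ht : ∀ k, t (k + 1) ≤ t k := by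
    intro k
    by_cases hk : k + 1 < n
    · simp only [t, dif_pos hk, dif_pos (Nat.lt_of_succ_lt hk)]
      exact hQ.antitone (Fin.mk_le_mk.mpr k.le_succ)
    · simp only [t, dif_neg hk]
      split_ifs
      exacts [hy _, le_rfl]
  have habel :=
    sum_range_sub_mul_ge (D := D) (by simp [D, h0]) (fun k => sub_nonneg.2 (hw _)) ht n
  have hsummand : ∀ k : Fin n, (D (k + 1) - D k) * t k
      = (F (prefixSet Q (k + 1)) - F (prefixSet Q k)) * y (Q k) - w (Q k) * y (Q k) := by
    intro k
    simp only [D, t, dif_pos k.isLt, prefixSet_succ, sum_insert (apply_notMem_prefixSet Q k)]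
    ring
  rw [← Fin.sum_univ_eq_sum_range (fun k => (D (k + 1) - D k) * t k),
    sum_congr rfl fun k _ => hsummand k, sum_sub_distrib,
    Equiv.sum_comp Q (fun j => w j * y j)] at habel
  simp only [t, lt_irrefl, dif_neg, not_false_eq_true, mul_zero] at habel
  rw [lovaszExt]
  linarith

end lovasz

theorem lovaszGrad_is_subgradient_general {n : ℕ} (F : Finset (Fin n) → ℝ)
    (hsub : Submodular F) (h0 : F ∅ = 0)
    (x y : Fin n → ℝ)
    (hy : ∀ i, y i ∈ Set.Icc (0 : ℝ) 1)
    (P Q : Equiv.Perm (Fin n)) (hQ : Consistent y Q) :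
    ∑ i, lovaszGrad F P i * (x i - y i) ≥ lovaszExt F P x - lovaszExt F Q y := by
  have hgy : ∑ i, lovaszGrad F P i * y i ≤ lovaszExt F Q y :=
    sum_mul_le_lovaszExt F h0 _ (sum_lovaszGrad_le F hsub h0 P) y (fun i => (hy i).1) Q hQ
  simp only [mul_sub, sum_sub_distrib, lovaszExt_eq_sum_lovaszGrad_mul F P x]
  linarith

/-- The Lovász subgradient is a subgradient of the Lovász extension:
`⟨g(x), x - y⟩ ≥ f(x) - f(y)` for all `y ∈ [0,1]^n`. -/
theorem lovaszGrad_is_subgradient {n : ℕ} (F : Finset (Fin n) → ℝ)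
    (hsub : Submodular F) (h0 : F ∅ = 0)
    (x y : Fin n → ℝ) (hx : ∀ i, x i ∈ Set.Icc (0 : ℝ) 1)
    (hy : ∀ i, y i ∈ Set.Icc (0 : ℝ) 1)
    (P Q : Equiv.Perm (Fin n)) (hP : Consistent x P) (hQ : Consistent y Q) :
    ∑ i, lovaszGrad F P i * (x i - y i) ≥ lovaszExt F P x - lovaszExt F Q y :=
  lovaszGrad_is_subgradient_general F hsub h0 x y hy P Q hQ
end

section
/- Biased ℓ₁-sampling estimator: Let u ∈ ℝ^n be non-zero, Γ > 0 a real, and S ⊆ [n] a set with Γ ≥ ‖u_S‖₁. Let Y_u be the random vector equal to Γ · sgn(u_i) · e_i where i is sampled from the distribution D_u(Γ,S). Then ‖E[Y_u] - u‖₁ = |Γ - ‖u‖₁| and ‖Y_u‖₂ = Γ almost surely. -/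
/-! Since `E[Y]_i = sgn(u_i) · Γ p_i`, the ℓ₁ error is `Σ_i |Γ p_i - |u_i||`. For `i ∉ S` the
weight of `D_u(Γ,S)` is `(Γ - ‖u_S‖₁)/‖u_{Sᶜ}‖₁ · |u_i| / Γ`, so `Γ p_i - |u_i|` is a fixed
multiple of `|u_i|` off `S` and vanishes on `S`. All these errors therefore have the same sign,
and their absolute values add up to `|Γ Σ_i p_i - ‖u‖₁| = |Γ - ‖u‖₁|`. -/

open MeasureTheory Finset

noncomputable def sgn (v : ℝ) : ℝ := if 0 ≤ v then 1 else -1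

theorem sgn_mul_abs (v : ℝ) : sgn v * |v| = v := by
  unfold sgn
  split_ifs with h
  · rw [one_mul, abs_of_nonneg h]
  · rw [abs_of_neg (not_le.mp h), neg_one_mul, neg_neg]

theorem abs_sgn (v : ℝ) : |sgn v| = 1 := by
  unfold sgn; split_ifs <;> norm_num

theorem abs_sgn_mul_sub (v a : ℝ) : |sgn v * a - v| = |(a - |v|)| := by
  have hfactor : sgn v * a - v = sgn v * (a - |v|) := by rw [mul_sub, sgn_mul_abs]
  rw [hfactor, abs_mul, abs_sgn, one_mul]

theorem Finset.sum_abs_const_mul_of_nonneg {ι : Type*} (s : Finset ι) (c : ℝ) {b : ι → ℝ}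
    (hb : ∀ i ∈ s, 0 ≤ b i) : ∑ i ∈ s, |c * b i| = |∑ i ∈ s, c * b i| := by
  rw [← mul_sum, abs_mul, abs_of_nonneg (sum_nonneg hb), mul_sum]
  exact sum_congr rfl fun i hi => by rw [abs_mul, abs_of_nonneg (hb i hi)]

section Sampling

variable {Ω ι : Type*} [MeasurableSpace Ω] [MeasurableSpace ι] [MeasurableSingletonClass ι]
  (μ : Measure Ω) {I : Ω → ι}

theorem integral_ite_eq_measureReal_preimage_mul [DecidableEq ι] (hI : Measurable I) (j : ι)
    (f : ι → ℝ) :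
    ∫ ω, (if j = I ω then f (I ω) else 0) ∂μ = μ.real (I ⁻¹' {j}) * f j := by
  have hind : (fun ω => if j = I ω then f (I ω) else 0) = (I ⁻¹' {j}).indicator fun _ => f j := by
    ext ω
    by_cases h : j = I ω
    · subst h; simp
    · simp [h, Ne.symm h]
  rw [hind, integral_indicator_const _ (hI (measurableSet_singleton j)), smul_eq_mul]

theorem sum_measureReal_preimage_singleton_eq_one [Fintype ι] [IsProbabilityMeasure μ]
    (hI : Measurable I) : ∑ i, μ.real (I ⁻¹' {i}) = 1 := by
  rw [sum_measureReal_preimage_singleton _ fun i _ => hI (measurableSet_singleton i)]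
  simp

end Sampling

section BiasedWeight

variable {ι : Type*} [Fintype ι] [DecidableEq ι] (u : ι → ℝ) (Γ : ℝ) (S : Finset ι)

/-- The probability that `D_u(Γ,S)` assigns to `i`. -/
noncomputable def biasedL1Weight (i : ι) : ℝ :=
  if i ∈ S then |u i| / Γ else (1 - (∑ j ∈ S, |u j|) / Γ) * (|u i| / ∑ j ∈ Sᶜ, |u j|)

variable {u Γ S}

theorem biasedL1Weight_nonneg (hΓ : 0 < Γ) (hΓS : ∑ i ∈ S, |u i| ≤ Γ) (i : ι) :
    0 ≤ biasedL1Weight u Γ S i := by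
  unfold biasedL1Weight
  split_ifs
  · positivity
  · have : (∑ j ∈ S, |u j|) / Γ ≤ 1 := (div_le_one hΓ).mpr hΓS
    exact mul_nonneg (by linarith) (by positivity)

/-- With `x / 0 = 0` this also holds when `‖u_{Sᶜ}‖₁ = 0`. -/
theorem mul_biasedL1Weight_sub_abs (hΓ : Γ ≠ 0) (i : ι) :
    Γ * biasedL1Weight u Γ S i - |u i| =
      ((Γ - ∑ j ∈ S, |u j|) / (∑ j ∈ Sᶜ, |u j|) - 1) * (if i ∈ S then 0 else |u i|) := by
  unfold biasedL1Weight
  split_ifs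
  · field_simp; ring
  · field_simp

theorem sum_abs_mul_biasedL1Weight_sub_abs (hΓ : Γ ≠ 0) :
    ∑ i, |(Γ * biasedL1Weight u Γ S i - |u i|)| =
      |(Γ * ∑ i, biasedL1Weight u Γ S i - ∑ i, |u i|)| := by
  simp_rw [mul_biasedL1Weight_sub_abs hΓ]
  rw [sum_abs_const_mul_of_nonneg _ _ fun i _ => by positivity]
  simp_rw [← mul_biasedL1Weight_sub_abs hΓ, sum_sub_distrib, mul_sum]

end BiasedWeight

theorem biased_l1_sampling_estimator_general {n : ℕ} (u : Fin n → ℝ)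
    (Γ : ℝ) (hΓ : 0 < Γ) (S : Finset (Fin n)) (hΓS : ∑ i ∈ S, |u i| ≤ Γ)
    {Ω : Type*} [MeasurableSpace Ω] (μ : Measure Ω) [IsProbabilityMeasure μ]
    (I : Ω → Fin n) (hI : Measurable I)
    (hdist : ∀ i, μ {ω | I ω = i} = ENNReal.ofReal
      (if i ∈ S then |u i| / Γ
       else (1 - (∑ j ∈ S, |u j|) / Γ) * (|u i| / ∑ j ∈ Sᶜ, |u j|)))
    (Y : Ω → Fin n → ℝ)
    (hY : ∀ ω j, Y ω j = if j = I ω then Γ * sgn (u (I ω)) else 0) :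
    (∑ j, |(∫ ω, Y ω j ∂μ) - u j| = abs (Γ - ∑ j, |u j|)) ∧
      ∀ ω, Real.sqrt (∑ j, (Y ω j) ^ 2) = Γ := by
  have hlaw : ∀ i, μ.real (I ⁻¹' {i}) = biasedL1Weight u Γ S i := fun i => by
    rw [measureReal_def, show I ⁻¹' {i} = {ω | I ω = i} from rfl, hdist i]
    exact ENNReal.toReal_ofReal (biasedL1Weight_nonneg hΓ hΓS i)
  have hmean : ∀ j, ∫ ω, Y ω j ∂μ = sgn (u j) * (Γ * biasedL1Weight u Γ S j) := fun j => by
    simp_rw [hY]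
    rw [integral_ite_eq_measureReal_preimage_mul μ hI j fun i => Γ * sgn (u i), hlaw]
    ring
  have htotal : ∑ i, biasedL1Weight u Γ S i = 1 := by
    simpa only [hlaw] using sum_measureReal_preimage_singleton_eq_one μ hI
  refine ⟨?_, fun ω => ?_⟩
  · simp_rw [hmean, abs_sgn_mul_sub]
    rw [sum_abs_mul_biasedL1Weight_sub_abs hΓ.ne', htotal, mul_one]
  · have hsq : ∑ j, Y ω j ^ 2 = (Γ * sgn (u (I ω))) ^ 2 := by simp [hY, ite_pow]
    rw [hsq, Real.sqrt_sq_eq_abs, abs_mul, abs_sgn, mul_one, abs_of_pos hΓ]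

/-- **Biased ℓ₁-sampling estimator.** Let `Γ ≥ ‖u_S‖₁`, `Γ > 0`, and let `I` be a
random index distributed as `D_u(Γ,S)`, i.e. `P(I = i) = |u_i|/Γ` for `i ∈ S` and
`P(I = i) = (1 - ‖u_S‖₁/Γ)·|u_i|/‖u_{Sᶜ}‖₁` for `i ∉ S`. Then
`Y = Γ · sgn(u_I) · e_I` satisfies `‖E[Y] - u‖₁ = |Γ - ‖u‖₁|` and `‖Y‖₂ = Γ` surely. -/
theorem biased_l1_sampling_estimator {n : ℕ} (u : Fin n → ℝ) (hu : u ≠ 0)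
    (Γ : ℝ) (hΓ : 0 < Γ) (S : Finset (Fin n)) (hΓS : ∑ i ∈ S, |u i| ≤ Γ)
    {Ω : Type*} [MeasurableSpace Ω] (μ : Measure Ω) [IsProbabilityMeasure μ]
    (I : Ω → Fin n) (hI : Measurable I)
    (hdist : ∀ i, μ {ω | I ω = i} = ENNReal.ofReal
      (if i ∈ S then |u i| / Γ
       else (1 - (∑ j ∈ S, |u j|) / Γ) * (|u i| / ∑ j ∈ Sᶜ, |u j|)))
    (Y : Ω → Fin n → ℝ)
    (hY : ∀ ω j, Y ω j = if j = I ω then Γ * sgn (u (I ω)) else 0) :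
    (∑ j, |(∫ ω, Y ω j ∂μ) - u j| = abs (Γ - ∑ j, |u j|)) ∧
      ∀ ω, Real.sqrt (∑ j, (Y ω j) ^ 2) = Γ :=
  biased_l1_sampling_estimator_general u Γ hΓ S hΓS μ I hI hdist Y hY
end

section
/- Total variation bound for D_u(Γ,S): Let u ∈ ℝ^n be non-zero, Γ > 0, and S ⊆ [n] with Γ ≥ ‖u_S‖₁ and ‖u_{[n]∖S}‖₁ > 0. Then the total variation distance between D_u(Γ,S) and D_u = (|u_1|/‖u‖₁, ..., |u_n|/‖u‖₁) is at most |Γ - ‖u‖₁| / min(Γ, ‖u‖₁). -/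
/-
Write `A = ‖u_S‖₁`, `B = ‖u_{[n]∖S}‖₁` and `T = A + B = ‖u‖₁`. On `S` and on its complement both
distributions are proportional to `|u_i|`, so their ℓ¹ distance is
`A |Γ⁻¹ - T⁻¹| + B |(1 - A/Γ)/B - T⁻¹|`, and since `B = T - A` the two terms are equal: the mass
added on `S` is the mass removed from its complement. The distance is thus
`A |Γ - T| / (Γ T) ≤ |Γ - T| / Γ`, because `A ≤ T`.
-/

open Finset

lemma sum_abs_ite_mem_mul {ι : Type*} [Fintype ι] [DecidableEq ι] (S : Finset ι)
    (w : ι → ℝ) (hw : ∀ i, 0 ≤ w i) (a b : ℝ) :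
    ∑ i, |if i ∈ S then w i * a else w i * b|
      = (∑ i ∈ S, w i) * |a| + (∑ i ∈ Sᶜ, w i) * |b| := by
  rw [← sum_add_sum_compl S, sum_mul, sum_mul]
  congr 1 <;> refine sum_congr rfl fun i hi => ?_
  · rw [if_pos hi, abs_mul, abs_of_nonneg (hw i)]
  · rw [if_neg (mem_compl.1 hi), abs_mul, abs_of_nonneg (hw i)]

lemma mul_abs_sub_compl_mass {A B Γ : ℝ} (hA : 0 ≤ A) (hB : 0 < B) (hΓ : Γ ≠ 0) :
    B * |(1 - A / Γ) / B - (A + B)⁻¹| = A * |Γ⁻¹ - (A + B)⁻¹| := by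
  have hT : A + B ≠ 0 := by positivity
  have hscaled : B * ((1 - A / Γ) / B - (A + B)⁻¹) = A * ((A + B)⁻¹ - Γ⁻¹) := by
    field_simp
    ring
  have := congrArg abs hscaled
  rwa [abs_mul, abs_mul, abs_of_pos hB, abs_of_nonneg hA, abs_sub_comm _ Γ⁻¹] at this

lemma mul_abs_inv_sub_inv_le {A Γ T : ℝ} (hAT : A ≤ T) (hΓ : 0 < Γ) (hT : 0 < T) :
    A * |Γ⁻¹ - T⁻¹| ≤ |Γ - T| / min Γ T :=
  calc A * |Γ⁻¹ - T⁻¹| = A * (|Γ - T| / (Γ * T)) := by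
        rw [inv_sub_inv hΓ.ne' hT.ne', abs_div, abs_of_pos (mul_pos hΓ hT), abs_sub_comm]
    _ ≤ T * (|Γ - T| / (Γ * T)) := by gcongr
    _ = |Γ - T| / Γ := by field_simp
    _ ≤ |Γ - T| / min Γ T :=
        div_le_div_of_nonneg_left (abs_nonneg _) (lt_min hΓ hT) (min_le_left Γ T)

theorem tv_bound_Du_Gamma_S_general {n : ℕ} (u : Fin n → ℝ)
    (Γ : ℝ) (hΓ : 0 < Γ) (S : Finset (Fin n))
    (hSc : 0 < ∑ i ∈ Sᶜ, |u i|)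
    (p : Fin n → ℝ)
    (hp : ∀ i, p i = if i ∈ S then |u i| / Γ
      else (1 - (∑ j ∈ S, |u j|) / Γ) * (|u i| / ∑ j ∈ Sᶜ, |u j|)) :
    (1 / 2) * ∑ i, abs (p i - |u i| / ∑ j, |u j|)
      ≤ abs (Γ - ∑ j, |u j|) / min Γ (∑ j, |u j|) := by
  set A := ∑ i ∈ S, |u i|
  set B := ∑ i ∈ Sᶜ, |u i|
  have hT : ∑ j, |u j| = A + B := (sum_add_sum_compl S _).symm
  have hA : 0 ≤ A := sum_nonneg fun i _ => abs_nonneg (u i)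
  have hdiff : ∀ i, p i - |u i| / (A + B) = if i ∈ S then |u i| * (Γ⁻¹ - (A + B)⁻¹)
      else |u i| * ((1 - A / Γ) / B - (A + B)⁻¹) := fun i => by
    rw [hp i]; split_ifs <;> ring
  simp only [hT, hdiff]
  rw [sum_abs_ite_mem_mul S _ (fun i => abs_nonneg (u i)),
    mul_abs_sub_compl_mass hA hSc hΓ.ne']
  linarith [mul_abs_inv_sub_inv_le (by linarith) hΓ (by linarith : 0 < A + B)]

/-- **Total variation bound for `D_u(Γ,S)`.** The total variation distance between
`D_u(Γ,S)` and `D_u = (|u_i|/‖u‖₁)_i` is at most `|Γ - ‖u‖₁| / min(Γ, ‖u‖₁)`. -/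
theorem tv_bound_Du_Gamma_S {n : ℕ} (u : Fin n → ℝ) (hu : u ≠ 0)
    (Γ : ℝ) (hΓ : 0 < Γ) (S : Finset (Fin n))
    (hΓS : ∑ i ∈ S, |u i| ≤ Γ) (hSc : 0 < ∑ i ∈ Sᶜ, |u i|)
    (p : Fin n → ℝ)
    (hp : ∀ i, p i = if i ∈ S then |u i| / Γ
      else (1 - (∑ j ∈ S, |u j|) / Γ) * (|u i| / ∑ j ∈ Sᶜ, |u j|)) :
    (1 / 2) * ∑ i, abs (p i - |u i| / ∑ j, |u j|)
      ≤ abs (Γ - ∑ j, |u j|) / min Γ (∑ j, |u j|) :=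
  tv_bound_Du_Gamma_S_general u Γ hΓ S hSc p hp
end

section
/- Expected cost bound for the mixture sampler: Let u ∈ ℝ^n be non-zero, T ≥ 2 an integer with T < n, Γ > 0 with |Γ - ‖u‖₁| ≤ ‖u‖₁/√T, and S = {i : |u_i| ≥ Γ/T} with ‖u_{[n]∖S}‖₁ > 0. Suppose sampling from S costs 1 and sampling from [n]∖S costs c·√(n·‖u_{[n]∖S}‖_∞ / ‖u_{[n]∖S}‖₁) for a constant c. Then the expected cost of T iterations of the mixture (branch into S with probability ‖u_S‖₁/Γ, else into [n]∖S) is at most T·(‖u_S‖₁/Γ) + T·(1 - ‖u_S‖₁/Γ)·c·√(n·‖u_{[n]∖S}‖_∞/‖u_{[n]∖S}‖₁) ≤ T + c'·√(Tn) for some constant c' depending only on c. -/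
open Finset Real

/-
Write `L = ‖u‖₁ = A + B` with `A = ‖u_S‖₁`, `B = ‖u_{Sᶜ}‖₁`, `M = ‖u_{Sᶜ}‖_∞`. Since `√T ≥ 4/3`, the
approximation `|Γ - L| ≤ L/√T` forces `L ≤ 4Γ`, hence `|Γ - L| ≤ 4Γ/√T`. So `A/Γ ≤ 1 + 4/√T`, which
bounds the first term by `T + 4√T`, and `1 - A/Γ ≤ B/Γ + 4/√T`. In the second term, the part
`T (B/Γ) √(nM/B) = T √(nMB)/Γ` is at most `2√(Tn)` because `MT ≤ Γ` and `B ≤ 4Γ`, and the part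
`T (4/√T) √(nM/B)` is at most `4√(Tn)` because `M ≤ B`.
-/

section SupNorm

variable {ι : Type*} (s : Finset ι) (f : ι → ℝ)

-- On `ℝ` the supremum of an empty family is `0`, hence the hypothesis `0 ≤ x`.
lemma biSup_le_of_forall_le {x : ℝ} (hx : 0 ≤ x) (h : ∀ i ∈ s, f i ≤ x) : ⨆ i ∈ s, f i ≤ x :=
  Real.iSup_le (fun i => Real.iSup_le (h i) hx) hx

lemma biSup_abs_nonneg : 0 ≤ ⨆ i ∈ s, |f i| :=
  Real.iSup_nonneg fun _ => Real.iSup_nonneg fun _ => abs_nonneg _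

lemma biSup_abs_le_sum_abs : ⨆ i ∈ s, |f i| ≤ ∑ i ∈ s, |f i| :=
  biSup_le_of_forall_le s _ (sum_nonneg fun _ _ => abs_nonneg _)
    fun _ hi => single_le_sum (fun j _ => abs_nonneg (f j)) hi

lemma biSup_abs_compl_filter_le [Fintype ι] [DecidableEq ι] {τ : ℝ} (hτ : 0 ≤ τ) :
    ⨆ i ∈ (univ.filter fun i => τ ≤ |f i|)ᶜ, |f i| ≤ τ :=
  biSup_le_of_forall_le _ _ hτ fun i hi => by
    simp only [mem_compl, mem_filter, mem_univ, true_and, not_le] at hi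
    exact hi.le

end SupNorm

section MixtureCost

variable {T Γ A B L : ℝ}

lemma le_four_mul_of_abs_sub_le_div_sqrt (hT : 2 ≤ T) (hΓ : 0 < Γ) (h : |Γ - L| ≤ L / √T) :
    L ≤ 4 * Γ := by
  have hs : 4 / 3 ≤ √T := (le_sqrt (by norm_num) (by linarith)).2 (by linarith)
  have hL : (L - Γ) * √T ≤ L :=
    (le_div_iff₀ (by linarith)).1 ((abs_sub_comm Γ L ▸ le_abs_self (L - Γ)).trans h)
  rcases le_or_gt L Γ with hLΓ | hLΓ
  · linarith
  · nlinarith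

lemma abs_sub_le_four_mul_div_sqrt (hT : 2 ≤ T) (hΓ : 0 < Γ) (h : |Γ - L| ≤ L / √T) :
    |Γ - L| ≤ 4 * Γ / √T :=
  h.trans (div_le_div_of_nonneg_right (le_four_mul_of_abs_sub_le_div_sqrt hT hΓ h) (sqrt_nonneg T))

lemma mul_div_le_add_four_mul_sqrt (hT : 0 ≤ T) (hΓ : 0 < Γ) (hAL : A ≤ L)
    (h : |Γ - L| ≤ 4 * Γ / √T) : T * (A / Γ) ≤ T + 4 * √T := by
  have hA : A / Γ ≤ 1 + 4 / √T := by
    rw [div_le_iff₀ hΓ]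
    linarith [neg_abs_le (Γ - L), mul_div_right_comm 4 Γ √T]
  calc T * (A / Γ) ≤ T * (1 + 4 / √T) := by gcongr
    _ = T + 4 * √T := by rw [mul_add, mul_one, mul_div_left_comm, div_sqrt]

lemma one_sub_div_le_div_add_four_div_sqrt (hΓ : 0 < Γ) (hL : A + B = L)
    (h : |Γ - L| ≤ 4 * Γ / √T) : 1 - A / Γ ≤ B / Γ + 4 / √T := by
  calc 1 - A / Γ = (Γ - A) / Γ := by field_simp
    _ ≤ (B + 4 * Γ / √T) / Γ := by gcongr; linarith [le_abs_self (Γ - L)]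
    _ = B / Γ + 4 / √T := by rw [add_div, mul_div_right_comm, mul_div_cancel_right₀ _ hΓ.ne']

variable {n M : ℝ}

lemma mul_div_mul_sqrt_le (hT : 0 ≤ T) (hn : 0 ≤ n) (hΓ : 0 < Γ) (hB : 0 < B) (hM : 0 ≤ M)
    (hMT : M * T ≤ Γ) (hBΓ : B ≤ 4 * Γ) : T * (B / Γ) * √(n * M / B) ≤ 2 * √(T * n) := by
  rw [← pow_le_pow_iff_left₀ (by positivity) (by positivity) two_ne_zero]
  simp only [mul_pow]
  rw [sq_sqrt (by positivity), sq_sqrt (by positivity)]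
  have hlhs : (B / Γ) ^ 2 * (n * M / B) = B * n * M / Γ ^ 2 := by field_simp
  rw [mul_assoc, hlhs, mul_div_assoc', div_le_iff₀ (by positivity)]
  calc T ^ 2 * (B * n * M) = T * B * n * (M * T) := by ring
    _ ≤ T * B * n * Γ := by gcongr
    _ ≤ T * (4 * Γ) * n * Γ := by gcongr
    _ = 2 ^ 2 * (T * n) * Γ ^ 2 := by ring

lemma sqrt_mul_div_le_sqrt (hn : 0 ≤ n) (hB : 0 < B) (hMB : M ≤ B) : √(n * M / B) ≤ √n :=
  sqrt_le_sqrt ((div_le_iff₀ hB).2 (mul_le_mul_of_nonneg_left hMB hn))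

theorem mixture_cost_le {c : ℝ} (hT : 2 ≤ T) (hTn : T ≤ n) (hc : 0 ≤ c) (hΓ : 0 < Γ)
    (hB : 0 < B) (hM : 0 ≤ M) (hMB : M ≤ B) (hMT : M * T ≤ Γ) (hA : 0 ≤ A)
    (happ : |Γ - (A + B)| ≤ (A + B) / √T) :
    T * (A / Γ) + T * (1 - A / Γ) * c * √(n * M / B) ≤ T + (4 + 6 * c) * √(T * n) := by
  have hT0 : 0 ≤ T := by linarith
  have hn : 0 ≤ n := by linarith
  have hδ := abs_sub_le_four_mul_div_sqrt hT hΓ happ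
  have first := mul_div_le_add_four_mul_sqrt hT0 hΓ (le_add_of_nonneg_right hB.le) hδ
  have heavy := mul_div_mul_sqrt_le hT0 hn hΓ hB hM hMT
    ((le_add_of_nonneg_left hA).trans (le_four_mul_of_abs_sub_le_div_sqrt hT hΓ happ))
  have light : √T * √(n * M / B) ≤ √(T * n) := by
    rw [sqrt_mul hT0]
    exact mul_le_mul_of_nonneg_left (sqrt_mul_div_le_sqrt hn hB hMB) (sqrt_nonneg T)
  have hTTn : √T ≤ √(T * n) := sqrt_le_sqrt (by nlinarith)
  have second : T * (1 - A / Γ) * c * √(n * M / B) ≤ 6 * c * √(T * n) := calc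
    T * (1 - A / Γ) * c * √(n * M / B) ≤ T * (B / Γ + 4 / √T) * c * √(n * M / B) := by
        gcongr
        exact one_sub_div_le_div_add_four_div_sqrt hΓ rfl hδ
    _ = c * (T * (B / Γ) * √(n * M / B)) + 4 * c * (T / √T * √(n * M / B)) := by ring
    _ ≤ c * (2 * √(T * n)) + 4 * c * √(T * n) := by rw [div_sqrt]; gcongr
    _ = 6 * c * √(T * n) := by ring
  linarith

end MixtureCost

/-- **Expected cost bound for the mixture sampler.** Suppose one sample from `S`
costs `1` and one sample from `Sᶜ` costs `c·√(n‖u_{Sᶜ}‖_∞/‖u_{Sᶜ}‖₁)`. If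
`|Γ - ‖u‖₁| ≤ ‖u‖₁/√T` and `S = {i : |u_i| ≥ Γ/T}` with `‖u_{Sᶜ}‖₁ > 0`, then the
expected cost of `T` mixture iterations,
`T·(‖u_S‖₁/Γ) + T·(1-‖u_S‖₁/Γ)·c·√(n‖u_{Sᶜ}‖_∞/‖u_{Sᶜ}‖₁)`, is at most
`T + c'·√(Tn)` for a constant `c'` depending only on `c`. -/
theorem mixture_sampler_expected_cost (c : ℝ) (hc : 0 < c) :
    ∃ c' : ℝ, 0 < c' ∧
      ∀ (n T : ℕ) (u : Fin n → ℝ) (Γ : ℝ) (S : Finset (Fin n)),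
        u ≠ 0 → 2 ≤ T → T < n → 0 < Γ →
        abs (Γ - ∑ i, |u i|) ≤ (∑ i, |u i|) / Real.sqrt T →
        S = Finset.univ.filter (fun i : Fin n => Γ / T ≤ |u i|) →
        0 < ∑ i ∈ Sᶜ, |u i| →
        (T : ℝ) * ((∑ i ∈ S, |u i|) / Γ)
            + (T : ℝ) * (1 - (∑ i ∈ S, |u i|) / Γ) * c *
              Real.sqrt ((n : ℝ) * (⨆ i ∈ Sᶜ, |u i|) / ∑ i ∈ Sᶜ, |u i|)
          ≤ (T : ℝ) + c' * Real.sqrt ((T : ℝ) * n) := by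
  refine ⟨4 + 6 * c, by positivity, ?_⟩
  rintro n T u Γ S - hT hTn hΓ happ rfl hB
  have hT' : (2 : ℝ) ≤ T := by exact_mod_cast hT
  have hMT := biSup_abs_compl_filter_le u (by positivity : 0 ≤ Γ / T)
  refine mixture_cost_le hT' (by exact_mod_cast hTn.le) hc.le hΓ hB (biSup_abs_nonneg _ _)
    (biSup_abs_le_sum_abs _ _) ((le_div_iff₀ (by positivity)).1 hMT) (sum_nonneg fun _ _ => abs_nonneg _) ?_
  rwa [sum_add_sum_compl]
end
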